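/- arXiv:2502.13314 — 2 statements merged into one kernel-verified Lean document; each statement's English description precedes it below -/
import Mathlib

section
/- Let b > 0 and Z ~ Laplace(0,b). If f is twice continuously differentiable with polynomially bounded f, f', f'', and f(q+Z) is itself unbiased for f(q) for all q ∈ ℝ (i.e. E[f(q+Z)] = f(q) for all q), then f'' ≡ 0, i.e. f is affine. -/
/-!
Split the expectation at the point `q`: with `u q = e^{-q/b} ∫_{-∞}^q f(x) e^{x/b} dx` and
`v q = e^{q/b} ∫_q^∞ f(x) e^{-x/b} dx` one has `2b · E[f(q+Z)] = u q + v q`, and the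
fundamental theorem of calculus gives `u' = f - u/b`, `v' = v/b - f`. Unbiasedness says
`2b f = u + v`, so `2b f' = (v - u)/b` and `2b f'' = (u + v)/b² - 2f/b = 0`. In other words,
the Laplace kernel is the Green's function of `1 - b² d²/dx²`.
-/

open MeasureTheory Real

/-- Density of the Laplace(0,b) distribution. -/
noncomputable def laplacePDF (b x : ℝ) : ℝ := (1 / (2 * b)) * Real.exp (-|x| / b)

/-- A function has at most polynomial growth. -/
def PolyGrowth (f : ℝ → ℝ) : Prop :=
  ∃ C n, ∀ x : ℝ, |f x| ≤ C * (1 + |x|) ^ (n : ℕ)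

open Set Filter Asymptotics Nat

namespace PolyGrowth

variable {f : ℝ → ℝ}

lemma comp_neg (hf : PolyGrowth f) : PolyGrowth fun x => f (-x) := by
  obtain ⟨C, n, hC⟩ := hf
  exact ⟨C, n, fun x => by simpa only [abs_neg] using hC (-x)⟩

lemma isBigO_exp_mul_atTop (hf : PolyGrowth f) {δ : ℝ} (hδ : 0 < δ) :
    f =O[atTop] fun x => exp (δ * x) := by
  obtain ⟨C, n, hC⟩ := hf
  have hC0 : 0 ≤ C := by simpa using (abs_nonneg _).trans (hC 0)
  refine IsBigO.of_bound (C * (n ! * exp δ / δ ^ n)) ?_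
  filter_upwards [eventually_ge_atTop 0] with x hx
  have hpow : (1 + x) ^ n ≤ n ! * exp δ / δ ^ n * exp (δ * x) := by
    have := pow_div_factorial_le_exp (δ * (1 + x)) (by positivity) n
    rw [mul_pow, div_le_iff₀ (by positivity), mul_add, mul_one, exp_add] at this
    rw [div_mul_eq_mul_div, le_div_iff₀ (by positivity)]
    linarith
  calc ‖f x‖ ≤ C * (1 + x) ^ n := by simpa [abs_of_nonneg hx] using hC x
    _ ≤ C * (n ! * exp δ / δ ^ n * exp (δ * x)) := mul_le_mul_of_nonneg_left hpow hC0
    _ = C * (n ! * exp δ / δ ^ n) * ‖exp (δ * x)‖ := by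
      rw [norm_of_nonneg (exp_pos _).le, mul_assoc]

lemma integrableOn_mul_exp_neg_Ioi (hc : Continuous f) (hf : PolyGrowth f) {b : ℝ} (hb : 0 < b)
    (q : ℝ) : IntegrableOn (fun x => f x * exp (-x / b)) (Ioi q) := by
  refine integrable_of_isBigO_exp_neg (b := 1 / (2 * b)) (by positivity) (by fun_prop) ?_
  refine ((hf.isBigO_exp_mul_atTop (δ := 1 / (2 * b)) (by positivity)).mul
    (isBigO_refl (fun x => exp (-x / b)) atTop)).congr_right fun x => ?_
  rw [← exp_add]
  congr 1
  field_simp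
  ring

lemma integrableOn_mul_exp_Iic (hc : Continuous f) (hf : PolyGrowth f) {b : ℝ} (hb : 0 < b)
    (q : ℝ) : IntegrableOn (fun x => f x * exp (x / b)) (Iic q) := by
  have := hf.comp_neg.integrableOn_mul_exp_neg_Ioi (hc.comp continuous_neg) hb (-q)
  simpa using ((integrableOn_Ici_iff_integrableOn_Ioi).mpr this).comp_neg_Iic

end PolyGrowth

lemma hasDerivAt_setIntegral_Iic {g : ℝ → ℝ} (hc : Continuous g)
    (hg : ∀ u, IntegrableOn g (Iic u)) (p : ℝ) :
    HasDerivAt (fun u => ∫ x in Iic u, g x) (g p) p := by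
  refine ((intervalIntegral.integral_hasDerivAt_right (hc.intervalIntegrable 0 p)
    (hc.stronglyMeasurableAtFilter _ _) hc.continuousAt).const_add
    (∫ x in Iic 0, g x)).congr_of_eventuallyEq (Eventually.of_forall fun u => ?_)
  simp [← intervalIntegral.integral_Iic_sub_Iic (hg 0) (hg u)]

lemma hasDerivAt_setIntegral_Ioi {g : ℝ → ℝ} (hc : Continuous g)
    (hg : ∀ u, IntegrableOn g (Ioi u)) (p : ℝ) :
    HasDerivAt (fun u => ∫ x in Ioi u, g x) (-g p) p := by
  refine ((intervalIntegral.integral_hasDerivAt_right (hc.intervalIntegrable 0 p)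
    (hc.stronglyMeasurableAtFilter _ _) hc.continuousAt).const_sub
    (∫ x in Ioi 0, g x)).congr_of_eventuallyEq (Eventually.of_forall fun u => ?_)
  simp [← intervalIntegral.integral_Ioi_sub_Ioi' (hg 0) (hg u)]

noncomputable def laplaceLeft (b : ℝ) (f : ℝ → ℝ) (q : ℝ) : ℝ :=
  exp (-q / b) * ∫ x in Iic q, f x * exp (x / b)

noncomputable def laplaceRight (b : ℝ) (f : ℝ → ℝ) (q : ℝ) : ℝ :=
  exp (q / b) * ∫ x in Ioi q, f x * exp (-x / b)

section Laplace

variable {f : ℝ → ℝ} {b : ℝ}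

lemma hasDerivAt_laplaceLeft (hc : Continuous f) (hf : PolyGrowth f) (hb : 0 < b) (q : ℝ) :
    HasDerivAt (laplaceLeft b f) (f q - laplaceLeft b f q / b) q := by
  have hI := hasDerivAt_setIntegral_Iic (by fun_prop) (hf.integrableOn_mul_exp_Iic hc hb) q
  have hE : HasDerivAt (fun u => exp (-u / b)) (exp (-q / b) * (-1 / b)) q :=
    ((hasDerivAt_id q).neg.div_const b).exp
  have he : exp (-q / b) * exp (q / b) = 1 := by rw [← exp_add, neg_div, neg_add_cancel, exp_zero]
  refine (hE.mul hI).congr_deriv ?_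
  unfold laplaceLeft
  linear_combination f q * he

lemma hasDerivAt_laplaceRight (hc : Continuous f) (hf : PolyGrowth f) (hb : 0 < b) (q : ℝ) :
    HasDerivAt (laplaceRight b f) (laplaceRight b f q / b - f q) q := by
  have hI := hasDerivAt_setIntegral_Ioi (by fun_prop) (hf.integrableOn_mul_exp_neg_Ioi hc hb) q
  have hE : HasDerivAt (fun u => exp (u / b)) (exp (q / b) * (1 / b)) q :=
    ((hasDerivAt_id q).div_const b).exp
  have he : exp (q / b) * exp (-q / b) = 1 := by rw [← exp_add, neg_div, add_neg_cancel, exp_zero]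
  refine (hE.mul hI).congr_deriv ?_
  unfold laplaceRight
  linear_combination -f q * he

lemma integral_mul_laplacePDF (hc : Continuous f) (hf : PolyGrowth f) (hb : 0 < b) (q : ℝ) :
    ∫ z, f (q + z) * laplacePDF b z = (laplaceLeft b f q + laplaceRight b f q) / (2 * b) := by
  have hL : EqOn (fun x => f x * laplacePDF b (x - q))
      (fun x => exp (-q / b) / (2 * b) * (f x * exp (x / b))) (Iic q) := fun x hx => by
    dsimp only
    rw [laplacePDF, abs_of_nonpos (sub_nonpos.mpr hx), neg_neg, sub_div, sub_eq_neg_add,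
      exp_add, neg_div]
    ring
  have hR : EqOn (fun x => f x * laplacePDF b (x - q))
      (fun x => exp (q / b) / (2 * b) * (f x * exp (-x / b))) (Ioi q) := fun x hx => by
    dsimp only
    rw [laplacePDF, abs_of_nonneg (sub_nonneg.mpr hx.le), neg_sub, sub_div, sub_eq_add_neg,
      exp_add, neg_div]
    ring
  rw [← integral_sub_right_eq_self _ q]
  simp only [add_sub_cancel]
  have hIic : IntegrableOn (fun x => f x * laplacePDF b (x - q)) (Iic q) :=
    IntegrableOn.congr_fun ((hf.integrableOn_mul_exp_Iic hc hb q).const_mul _) hL.symm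
      measurableSet_Iic
  have hIoi : IntegrableOn (fun x => f x * laplacePDF b (x - q)) (Ioi q) :=
    IntegrableOn.congr_fun ((hf.integrableOn_mul_exp_neg_Ioi hc hb q).const_mul _) hR.symm
      measurableSet_Ioi
  rw [← intervalIntegral.integral_Iic_add_Ioi hIic hIoi,
    setIntegral_congr_fun measurableSet_Iic hL, setIntegral_congr_fun measurableSet_Ioi hR,
    integral_const_mul, integral_const_mul, laplaceLeft, laplaceRight]
  ring

end Laplace

lemma hasDerivAt_deriv_eq_zero_of_two_mul_eq_add {b : ℝ} (hb : b ≠ 0) {f u v : ℝ → ℝ}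
    (hu : ∀ q, HasDerivAt u (f q - u q / b) q) (hv : ∀ q, HasDerivAt v (v q / b - f q) q)
    (huv : ∀ q, 2 * b * f q = u q + v q) (q : ℝ) : HasDerivAt (deriv f) 0 q := by
  have hf_eq : f = fun q => (u q + v q) / (2 * b) :=
    funext fun q => by rw [← huv q]; field_simp
  have hderiv : deriv f = fun q => (v q - u q) / (2 * b ^ 2) := funext fun q => by
    rw [hf_eq]
    refine (((hu q).add (hv q)).div_const (2 * b)).deriv.trans ?_
    field_simp
    ring
  rw [hderiv]
  refine (((hv q).sub (hu q)).div_const (2 * b ^ 2)).congr_deriv ?_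
  field_simp
  linear_combination -huv q

lemma exists_eq_mul_add_of_hasDerivAt_deriv_eq_zero {f : ℝ → ℝ} (hf : Differentiable ℝ f)
    (h : ∀ x, HasDerivAt (deriv f) 0 x) : ∃ c d : ℝ, ∀ x, f x = c * x + d := by
  have hconst : ∀ x, deriv f x = deriv f 0 := fun x =>
    is_const_of_deriv_eq_zero (fun x => (h x).differentiableAt) (fun x => (h x).deriv) x 0
  have hg : ∀ x, HasDerivAt (fun z => f z - deriv f 0 * z) 0 x := fun x =>
    ((hf x).hasDerivAt.sub ((hasDerivAt_id' x).const_mul (deriv f 0))).congr_deriv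
      (by rw [hconst x, mul_one, sub_self])
  refine ⟨deriv f 0, f 0, fun x => ?_⟩
  have := is_const_of_deriv_eq_zero (fun x => (hg x).differentiableAt) (fun x => (hg x).deriv) x 0
  simp only [mul_zero, sub_zero] at this
  linarith

theorem plugin_unbiased_iff_affine_general (b : ℝ) (hb : 0 < b) (f : ℝ → ℝ)
    (hf : ContDiff ℝ 2 f)
    (hg0 : PolyGrowth f)
    (hunb : ∀ q : ℝ, ∫ z : ℝ, f (q + z) * laplacePDF b z = f q) :
    (∀ x : ℝ, deriv (deriv f) x = 0) ∧ ∃ c d : ℝ, ∀ x : ℝ, f x = c * x + d := by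
  have hf'' : ∀ q, HasDerivAt (deriv f) 0 q :=
    hasDerivAt_deriv_eq_zero_of_two_mul_eq_add hb.ne'
      (hasDerivAt_laplaceLeft hf.continuous hg0 hb) (hasDerivAt_laplaceRight hf.continuous hg0 hb)
      fun q => by
        rw [← hunb q, integral_mul_laplacePDF hf.continuous hg0 hb]
        field_simp
  exact ⟨fun x => (hf'' x).deriv,
    exists_eq_mul_add_of_hasDerivAt_deriv_eq_zero (hf.differentiable (by norm_num)) hf''⟩

/-- If the plug-in estimator `f(q+Z)` is unbiased for `f(q)` for all `q` under
Laplace(0,b) noise, then `f'' ≡ 0`, i.e. `f` is affine. -/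
theorem plugin_unbiased_iff_affine (b : ℝ) (hb : 0 < b) (f : ℝ → ℝ)
    (hf : ContDiff ℝ 2 f)
    (hg0 : PolyGrowth f) (hg1 : PolyGrowth (deriv f)) (hg2 : PolyGrowth (deriv (deriv f)))
    (hunb : ∀ q : ℝ, ∫ z : ℝ, f (q + z) * laplacePDF b z = f q) :
    (∀ x : ℝ, deriv (deriv f) x = 0) ∧ ∃ c d : ℝ, ∀ x : ℝ, f x = c * x + d :=
  plugin_unbiased_iff_affine_general b hb f hf hg0 hunb
end

section
/- Let b > 0 and Z ~ Laplace(0,b). Define f̃(x) = 1/x for x ≥ 1 and f̃(x) = 1 − (x−1) + (x−1)² for x < 1, and let g(x) = f̃(x) − b²·f̃''(x). Then for every q ≥ 1, E[g(q+Z)] = 1/q. -/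
open MeasureTheory Real

/-- The extended function `f̃` (equal to `1/x` on `[1,∞)`, quadratic below 1). -/
noncomputable def fTilde (x : ℝ) : ℝ :=
  if 1 ≤ x then 1 / x else 1 - (x - 1) + (x - 1) ^ 2

/-- Second derivative of `f̃`. -/
noncomputable def fTilde'' (x : ℝ) : ℝ := if 1 ≤ x then 2 / x ^ 3 else 2

/-!
On each half-line the Laplace density is `(2b)⁻¹ exp (∓x / b)`, and `(f - b² f'') exp (-x / b)` is
the derivative of `-(b f + b² f') exp (-x / b)`. Hence the integral over `(0, ∞)` is
`b f 0 + b² f' 0`, and by reflection the one over `(-∞, 0)` is `b f 0 - b² f' 0`: the `f'` terms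
cancel and the total is `f 0`. The boundary terms at infinity vanish as soon as `f, f', f''` grow
more slowly than `exp (|x| / b)`; `f̃` and its first two derivatives are `O(1 + x²)`. Applied to
`f = f̃ (q + ·)` this gives `f̃ q = 1 / q`.
-/

open Set Filter Topology Asymptotics

lemma laplacePDF_of_nonneg {b x : ℝ} (hx : 0 ≤ x) : laplacePDF b x = (2 * b)⁻¹ * exp (-x / b) := by
  rw [laplacePDF, abs_of_nonneg hx, one_div]

lemma laplacePDF_neg (b x : ℝ) : laplacePDF b (-x) = laplacePDF b x := by
  rw [laplacePDF, laplacePDF, abs_neg]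

lemma integral_mul_laplacePDF_s10 {b : ℝ} {F : ℝ → ℝ}
    (hpos : IntegrableOn (fun x => F x * exp (-x / b)) (Ioi 0))
    (hneg : IntegrableOn (fun x => F (-x) * exp (-x / b)) (Ioi 0)) :
    ∫ x, F x * laplacePDF b x =
      (2 * b)⁻¹ * ((∫ x in Ioi 0, F x * exp (-x / b)) + ∫ x in Ioi 0, F (-x) * exp (-x / b)) := by
  set g := fun x => F x * laplacePDF b x
  have hg : ∀ x ∈ Ioi (0 : ℝ), g x = (2 * b)⁻¹ * (F x * exp (-x / b)) := fun x hx => by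
    simp only [g, laplacePDF_of_nonneg (le_of_lt hx)]; ring
  have hg_neg : ∀ x ∈ Ioi (0 : ℝ), g (-x) = (2 * b)⁻¹ * (F (-x) * exp (-x / b)) := fun x hx => by
    simp only [g, laplacePDF_neg, laplacePDF_of_nonneg (le_of_lt hx)]; ring
  have hIoi : IntegrableOn g (Ioi 0) :=
    IntegrableOn.congr_fun (hpos.const_mul _) (fun x hx => (hg x hx).symm) measurableSet_Ioi
  have hIic : IntegrableOn g (Iic 0) := by
    have : IntegrableOn (fun x => g (-x)) (Ici (-0)) := by
      rw [neg_zero, integrableOn_Ici_iff_integrableOn_Ioi]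
      exact IntegrableOn.congr_fun (hneg.const_mul _) (fun x hx => (hg_neg x hx).symm)
        measurableSet_Ioi
    simpa only [neg_neg] using this.comp_neg_Iic
  rw [← intervalIntegral.integral_Iic_add_Ioi hIic hIoi, ← neg_zero, ← integral_comp_neg_Ioi,
    neg_zero, setIntegral_congr_fun measurableSet_Ioi hg,
    setIntegral_congr_fun measurableSet_Ioi hg_neg, integral_const_mul, integral_const_mul]
  ring

section HalfLine

variable {a b : ℝ} {f f' f'' : ℝ → ℝ}

lemma isBigO_mul_exp_neg_div (ho : f =O[atTop] fun x => exp (a * x)) :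
    (fun x => f x * exp (-x / b)) =O[atTop] fun x => exp (-(b⁻¹ - a) * x) :=
  (ho.mul (isBigO_refl _ _)).congr_right fun x => by rw [← exp_add]; ring_nf

lemma integrableOn_Ioi_mul_exp_neg_div (ha : a < b⁻¹) (hf : Continuous f)
    (ho : f =O[atTop] fun x => exp (a * x)) :
    IntegrableOn (fun x => f x * exp (-x / b)) (Ioi 0) :=
  integrable_of_isBigO_exp_neg (sub_pos.2 ha) (by fun_prop) (isBigO_mul_exp_neg_div ho)

lemma tendsto_mul_exp_neg_div_atTop (ha : a < b⁻¹) (ho : f =O[atTop] fun x => exp (a * x)) :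
    Tendsto (fun x => f x * exp (-x / b)) atTop (𝓝 0) :=
  (isBigO_mul_exp_neg_div ho).trans_tendsto <| tendsto_exp_atBot.comp <|
    tendsto_id.const_mul_atTop_of_neg (neg_neg_iff_pos.2 (sub_pos.2 ha))

lemma integral_Ioi_sub_sq_mul_deriv2_mul_exp_neg_div (hb : b ≠ 0) (ha : a < b⁻¹)
    (hf : ∀ x, HasDerivAt f (f' x) x) (hf' : ∀ x, HasDerivAt f' (f'' x) x)
    (hf'' : Continuous f'') (ho : f =O[atTop] fun x => exp (a * x))
    (ho' : f' =O[atTop] fun x => exp (a * x)) (ho'' : f'' =O[atTop] fun x => exp (a * x)) :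
    ∫ x in Ioi 0, (f x - b ^ 2 * f'' x) * exp (-x / b) = b * f 0 + b ^ 2 * f' 0 := by
  have hf_cont : Continuous f := continuous_iff_continuousAt.2 fun x => (hf x).continuousAt
  have hf'_cont : Continuous f' := continuous_iff_continuousAt.2 fun x => (hf' x).continuousAt
  set G := fun x => -(b * f x + b ^ 2 * f' x) * exp (-x / b)
  have hG : ∀ x, HasDerivAt G ((f x - b ^ 2 * f'' x) * exp (-x / b)) x := fun x => by
    have hexp : HasDerivAt (fun x => exp (-x / b)) (-b⁻¹ * exp (-x / b)) x := by
      simpa [div_eq_mul_inv, mul_comm] using ((hasDerivAt_neg x).div_const b).exp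
    refine ((((hf x).const_mul b).add ((hf' x).const_mul (b ^ 2))).neg.mul hexp).congr_deriv ?_
    simp only [Pi.neg_apply, Pi.add_apply]
    field_simp
    ring
  have hG_lim : Tendsto G atTop (𝓝 0) := by
    simpa only [G, neg_mul, neg_zero] using (tendsto_mul_exp_neg_div_atTop ha
      ((ho.const_mul_left b).add (ho'.const_mul_left (b ^ 2)))).neg
  have hint := integrableOn_Ioi_mul_exp_neg_div ha (by fun_prop)
    (ho.sub (ho''.const_mul_left (b ^ 2)))
  rw [integral_Ioi_of_hasDerivAt_of_tendsto (hG 0).continuousAt.continuousWithinAt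
    (fun x _ => hG x) hint hG_lim]
  simp [G]

end HalfLine

lemma isBigO_exp_abs_of_abs_le_one_add_sq {a C : ℝ} {g : ℝ → ℝ} (ha : 0 < a)
    (hg : ∀ x, |g x| ≤ C * (1 + x ^ 2)) : g =O[cocompact ℝ] fun x => exp (a * |x|) := by
  have hpoly : (fun t : ℝ => 1 + t ^ 2) =O[atTop] fun t => exp (a * t) := by
    simpa using ((isLittleO_pow_exp_pos_mul_atTop 0 ha).add
      (isLittleO_pow_exp_pos_mul_atTop 2 ha)).isBigO
  have habs : Tendsto (fun x : ℝ => |x|) (cocompact ℝ) atTop := by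
    rw [cocompact_eq_atBot_atTop]
    exact tendsto_abs_atBot_atTop.sup tendsto_abs_atTop_atTop
  refine (IsBigO.of_bound C (Eventually.of_forall fun x => ?_)).trans
    (by simpa only [Function.comp_def, sq_abs] using hpoly.comp_tendsto habs)
  rw [Real.norm_eq_abs, Real.norm_eq_abs, abs_of_pos (by positivity : 0 < 1 + x ^ 2)]
  exact hg x

namespace Asymptotics.IsBigO

variable {a : ℝ} {g : ℝ → ℝ}

lemma atTop_of_exp_abs (ho : g =O[cocompact ℝ] fun x => exp (a * |x|)) :
    g =O[atTop] fun x => exp (a * x) :=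
  (ho.mono atTop_le_cocompact).congr' EventuallyEq.rfl <| by
    filter_upwards [eventually_ge_atTop 0] with x hx
    rw [abs_of_nonneg hx]

lemma comp_neg_of_exp_abs (ho : g =O[cocompact ℝ] fun x => exp (a * |x|)) :
    (fun x => g (-x)) =O[cocompact ℝ] fun x => exp (a * |x|) := by
  simpa only [Function.comp_def, abs_neg] using ho.comp_tendsto
    (show Tendsto (fun x : ℝ => -x) _ _ from (Homeomorph.neg ℝ).map_cocompact.le)

lemma comp_const_add_of_exp_abs (ha : 0 ≤ a)
    (ho : g =O[cocompact ℝ] fun x => exp (a * |x|)) (q : ℝ) :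
    (fun x => g (q + x)) =O[cocompact ℝ] fun x => exp (a * |x|) := by
  refine (ho.comp_tendsto (Homeomorph.addLeft q).map_cocompact.le).trans <|
    IsBigO.of_bound (exp (a * |q|)) (Eventually.of_forall fun x => ?_)
  simp only [Real.norm_eq_abs, abs_exp, Function.comp_apply, Homeomorph.coe_addLeft, ← exp_add]
  gcongr
  nlinarith [abs_add_le q x]

end Asymptotics.IsBigO

theorem integral_sub_sq_mul_deriv2_mul_laplacePDF {a b : ℝ} {f f' f'' : ℝ → ℝ} (hb : b ≠ 0)
    (ha : a < b⁻¹) (hf : ∀ x, HasDerivAt f (f' x) x) (hf' : ∀ x, HasDerivAt f' (f'' x) x)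
    (hf'' : Continuous f'') (ho : f =O[cocompact ℝ] fun x => exp (a * |x|))
    (ho' : f' =O[cocompact ℝ] fun x => exp (a * |x|))
    (ho'' : f'' =O[cocompact ℝ] fun x => exp (a * |x|)) :
    ∫ x, (f x - b ^ 2 * f'' x) * laplacePDF b x = f 0 := by
  have hF : Continuous fun x => f x - b ^ 2 * f'' x :=
    (continuous_iff_continuousAt.2 fun x => (hf x).continuousAt).sub (hf''.const_mul _)
  have hoF := ho.sub (ho''.const_mul_left (b ^ 2))
  have hf_neg : ∀ x, HasDerivAt (fun x => f (-x)) (-f' (-x)) x := fun x => by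
    simpa [Function.comp_def] using (hf (-x)).scomp x (hasDerivAt_neg x)
  have hf'_neg : ∀ x, HasDerivAt (fun x => -f' (-x)) (f'' (-x)) x := fun x => by
    simpa [Function.comp_def, Pi.neg_def] using ((hf' (-x)).scomp x (hasDerivAt_neg x)).neg
  rw [integral_mul_laplacePDF_s10 (integrableOn_Ioi_mul_exp_neg_div ha hF hoF.atTop_of_exp_abs)
      (integrableOn_Ioi_mul_exp_neg_div ha (hF.comp continuous_neg)
        hoF.comp_neg_of_exp_abs.atTop_of_exp_abs),
    integral_Ioi_sub_sq_mul_deriv2_mul_exp_neg_div hb ha hf hf' hf'' ho.atTop_of_exp_abs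
      ho'.atTop_of_exp_abs ho''.atTop_of_exp_abs,
    integral_Ioi_sub_sq_mul_deriv2_mul_exp_neg_div hb ha hf_neg hf'_neg (hf''.comp continuous_neg)
      ho.comp_neg_of_exp_abs.atTop_of_exp_abs ho'.comp_neg_of_exp_abs.neg_left.atTop_of_exp_abs
      ho''.comp_neg_of_exp_abs.atTop_of_exp_abs]
  rw [neg_zero]
  field_simp
  ring

lemma hasDerivAt_ite_le {c x : ℝ} {u v u' v' : ℝ → ℝ}
    (hu : ∀ y, c ≤ y → HasDerivAt u (u' y) y) (hv : ∀ y, y ≤ c → HasDerivAt v (v' y) y)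
    (h₀ : u c = v c) (h₁ : u' c = v' c) :
    HasDerivAt (fun y => if c ≤ y then u y else v y) (if c ≤ x then u' x else v' x) x := by
  rcases lt_trichotomy x c with hx | rfl | hx
  · rw [if_neg hx.not_ge]
    refine (hv x hx.le).congr_of_eventuallyEq ?_
    filter_upwards [Iio_mem_nhds hx] with y hy
    exact if_neg (not_le.2 hy)
  · rw [if_pos le_rfl]
    have hIci : HasDerivWithinAt (fun y => if x ≤ y then u y else v y) (u' x) (Ici x) x :=
      (hu x le_rfl).hasDerivWithinAt.congr (fun y hy => if_pos hy) (if_pos le_rfl)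
    have hIic : HasDerivWithinAt (fun y => if x ≤ y then u y else v y) (u' x) (Iic x) x := by
      refine h₁ ▸ (hv x le_rfl).hasDerivWithinAt.congr (fun y hy => ?_) (by simp [h₀])
      rcases (mem_Iic.1 hy).eq_or_lt with rfl | hy
      · simp [h₀]
      · exact if_neg (not_le.2 hy)
    simpa only [Iic_union_Ici, hasDerivWithinAt_univ] using hIic.union hIci
  · rw [if_pos hx.le]
    refine (hu x hx.le).congr_of_eventuallyEq ?_
    filter_upwards [Ioi_mem_nhds hx] with y hy
    exact if_pos (le_of_lt hy)

noncomputable def fTilde' (x : ℝ) : ℝ := if 1 ≤ x then -1 / x ^ 2 else 2 * (x - 1) - 1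

lemma hasDerivAt_fTilde (x : ℝ) : HasDerivAt fTilde (fTilde' x) x := by
  unfold fTilde fTilde'
  refine hasDerivAt_ite_le (u' := fun y => -1 / y ^ 2) (v' := fun y => 2 * (y - 1) - 1)
    (fun y hy => ?_) (fun y _ => ?_) (by norm_num) (by norm_num)
  · refine ((hasDerivAt_const y 1).div (hasDerivAt_id' y) (by positivity)).congr_deriv ?_
    field_simp
    ring
  · have h := (hasDerivAt_id' y).sub_const 1
    refine (((hasDerivAt_const y 1).sub h).add (h.pow 2)).congr_deriv ?_
    norm_num
    ring

lemma hasDerivAt_fTilde' (x : ℝ) : HasDerivAt fTilde' (fTilde'' x) x := by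
  unfold fTilde' fTilde''
  refine hasDerivAt_ite_le (u' := fun y => 2 / y ^ 3) (v' := fun _ => 2)
    (fun y hy => ?_) (fun y _ => ?_) (by norm_num) (by norm_num)
  · refine ((hasDerivAt_const y (-1)).div (hasDerivAt_pow 2 y) (by positivity)).congr_deriv ?_
    field_simp
    ring
  · simpa using (((hasDerivAt_id' y).sub_const 1).const_mul 2).sub_const 1

lemma continuous_fTilde'' : Continuous fTilde'' :=
  continuous_if_le continuous_const continuous_id
    (continuousOn_const.div (continuousOn_pow 3) fun x (hx : 1 ≤ x) => by positivity)
    continuousOn_const fun x hx => by simp [← hx]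

lemma abs_fTilde_le (x : ℝ) : |fTilde x| ≤ 4 * (1 + x ^ 2) := by
  unfold fTilde
  split_ifs with hx
  · rw [abs_of_pos (by positivity), div_le_iff₀ (by positivity)]
    nlinarith
  · rw [abs_le]
    constructor <;> nlinarith [sq_nonneg (2 * x + 1)]

lemma abs_fTilde'_le (x : ℝ) : |fTilde' x| ≤ 4 * (1 + x ^ 2) := by
  unfold fTilde'
  split_ifs with hx
  · rw [abs_div, abs_neg, abs_one, abs_of_pos (by positivity), div_le_iff₀ (by positivity)]
    nlinarith
  · rw [abs_le]
    constructor <;> nlinarith [sq_nonneg (x - 1)]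

lemma abs_fTilde''_le (x : ℝ) : |fTilde'' x| ≤ 4 * (1 + x ^ 2) := by
  unfold fTilde''
  split_ifs with hx
  · rw [abs_of_pos (by positivity), div_le_iff₀ (by positivity)]
    nlinarith [sq_nonneg x, pow_le_pow_left₀ zero_le_one hx 3]
  · rw [abs_two]
    nlinarith [sq_nonneg x]

/-- The estimator `g(x) = f̃(x) - b²·f̃''(x)` is unbiased for `1/q` for all `q ≥ 1`
under Laplace(0,b) noise. -/
theorem unbiased_inverse_laplace (b : ℝ) (hb : 0 < b) :
    ∀ q : ℝ, 1 ≤ q →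
      ∫ z : ℝ, (fTilde (q + z) - b ^ 2 * fTilde'' (q + z)) * laplacePDF b z = 1 / q := by
  intro q hq
  have ha : 0 < (2 * b)⁻¹ := by positivity
  have ha' : (2 * b)⁻¹ < b⁻¹ := inv_strictAnti₀ hb (by linarith)
  have growth {g : ℝ → ℝ} (hg : ∀ x, |g x| ≤ 4 * (1 + x ^ 2)) :=
    (isBigO_exp_abs_of_abs_le_one_add_sq ha hg).comp_const_add_of_exp_abs ha.le q
  rw [integral_sub_sq_mul_deriv2_mul_laplacePDF hb.ne' ha'
    (fun x => (hasDerivAt_fTilde (q + x)).comp_const_add q x)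
    (fun x => (hasDerivAt_fTilde' (q + x)).comp_const_add q x)
    (continuous_fTilde''.comp (continuous_const_add q))
    (growth abs_fTilde_le) (growth abs_fTilde'_le) (growth abs_fTilde''_le),
    add_zero, fTilde, if_pos hq]
end
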